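/- (Theorem 1, case ᾱ = ∞.) Fix an integer k ≥ 2. Call t', t'' ∈ T(N,k) confusable if there exists a real c ≥ 1 such that c·t' = t'' or c·t'' = t' as vectors in ℝ^k, and call S ⊆ T(N,k) a zero-error code if no two distinct elements of S are confusable. Let M(N) be the maximum cardinality of a zero-error code in T(N,k). Then lim_{N→∞} M(N) / binomial(N,k) = ζ(k)^{-1}, where ζ(k) = ∑_{n=1}^∞ n^{-k}. Moreover C(N,k) is an optimal zero-error code, i.e., M(N) = |C(N,k)| for every N. -/

import Mathlib

open Filter

/-- The space of `k`-event signals: `k` inter-event intervals, each at least 1,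
summing to at most `N`. -/
def SignalSpace (N k : ℕ) : Finset (Fin k → ℕ) :=
  (Fintype.piFinset fun _ => Finset.Icc 1 N).filter fun t => ∑ i, t i ≤ N

/-- The signals in `SignalSpace N k` whose coordinates are coprime (gcd 1). -/
def CoprimeCode (N k : ℕ) : Finset (Fin k → ℕ) :=
  (SignalSpace N k).filter fun t => Finset.univ.gcd t = 1

/-- Confusability for an unbounded time-dilation factor: one signal is a real
multiple (with factor `≥ 1`) of the other. -/
def Confusable {k : ℕ} (u v : Fin k → ℕ) : Prop :=
  ∃ c : ℝ, 1 ≤ c ∧ ((∀ i, c * (u i : ℝ) = (v i : ℝ)) ∨ (∀ i, c * (v i : ℝ) = (u i : ℝ)))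

/-- A zero-error code inside `SignalSpace N k`: no two distinct codewords are confusable. -/
def IsZeroErrorCode (N k : ℕ) (S : Finset (Fin k → ℕ)) : Prop :=
  S ⊆ SignalSpace N k ∧ ∀ u ∈ S, ∀ v ∈ S, u ≠ v → ¬ Confusable u v

/-- `ζ(k) = ∑_{n=1}^∞ n^{-k}`. -/
noncomputable def zetaSum (k : ℕ) : ℝ := ∑' n : ℕ, (1 : ℝ) / ((n : ℝ) + 1) ^ k

/-! A zero-error code contains at most one signal from each ray `{c • t}`, and the ray through
`t ∈ T(N,k)` contains exactly one point with gcd 1, namely `t / gcd t`, again in `T(N,k)`; so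
`C(N,k)` is an optimal code. The signals of `T(N,k)` divisible by `d` are `d • T(⌊N/d⌋,k)` and
`|T(n,k)| = n.choose k`, so Möbius inversion over the common divisor gives
`|C(N,k)| = ∑ d, μ d * (N / d).choose k`. Divided by `N.choose k`, the `d`-th term tends to
`μ d / d^k` and is bounded by `1 / d^k`, so by dominated convergence the ratio tends to
`∑ μ d / d^k = 1 / ζ(k)`. -/

open Finset ArithmeticFunction Asymptotics Topology
open scoped ArithmeticFunction.Moebius ArithmeticFunction.zeta

theorem mem_signalSpace {N k : ℕ} {t : Fin k → ℕ} :
    t ∈ SignalSpace N k ↔ (∀ i, 1 ≤ t i) ∧ ∑ i, t i ≤ N := by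
  simp only [SignalSpace, mem_filter, Fintype.mem_piFinset, mem_Icc]
  refine ⟨fun h => ⟨fun i => (h.1 i).1, h.2⟩, fun h => ⟨fun i => ⟨h.1 i, ?_⟩, h.2⟩⟩
  exact (single_le_sum (fun j _ => Nat.zero_le (t j)) (mem_univ i)).trans h.2

theorem cons_mem_signalSpace {N k j : ℕ} {t : Fin k → ℕ} :
    (Fin.cons j t : Fin (k + 1) → ℕ) ∈ SignalSpace N (k + 1) ↔
      1 ≤ j ∧ j ≤ N ∧ t ∈ SignalSpace (N - j) k := by
  simp only [mem_signalSpace, Fin.forall_fin_succ, Fin.sum_univ_succ, Fin.cons_zero,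
    Fin.cons_succ]
  constructor
  · rintro ⟨⟨hj, ht⟩, hsum⟩
    exact ⟨hj, le_of_add_le_left hsum, ht, Nat.le_sub_of_add_le' hsum⟩
  · rintro ⟨hj, hjN, ht, hsum⟩
    exact ⟨⟨hj, ht⟩, (Nat.le_sub_iff_add_le' hjN).mp hsum⟩

theorem sum_range_choose_eq_choose_succ (N k : ℕ) :
    ∑ m ∈ range N, m.choose k = N.choose (k + 1) := by
  induction N with
  | zero => simp
  | succ N ih => rw [sum_range_succ, ih, Nat.choose_succ_succ', add_comm]

theorem card_signalSpace (N k : ℕ) : #(SignalSpace N k) = N.choose k := by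
  induction k generalizing N with
  | zero => simp [SignalSpace]
  | succ k ih =>
    -- split off the first interval `t 0 = N - j`, leaving the budget `j` for the others
    have : #((range N).sigma fun j => SignalSpace j k) = #(SignalSpace N (k + 1)) := by
      refine card_nbij' (fun p => Fin.cons (N - p.1) p.2) (fun t => ⟨N - t 0, Fin.tail t⟩)
        ?_ ?_ ?_ ?_
      · rintro ⟨j, t⟩ hjt
        simp only [mem_coe, mem_sigma, mem_range] at hjt
        dsimp only
        rw [mem_coe, cons_mem_signalSpace, Nat.sub_sub_self hjt.1.le]
        exact ⟨by omega, by omega, hjt.2⟩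
      · intro t ht
        rw [mem_coe, ← Fin.cons_self_tail t, cons_mem_signalSpace] at ht
        simp only [mem_coe, mem_sigma, mem_range]
        exact ⟨by omega, ht.2.2⟩
      · rintro ⟨j, t⟩ hjt
        simp only [mem_coe, mem_sigma, mem_range] at hjt
        dsimp only
        rw [Fin.cons_zero, Fin.tail_cons, Nat.sub_sub_self hjt.1.le]
      · intro t ht
        rw [mem_coe, ← Fin.cons_self_tail t, cons_mem_signalSpace] at ht
        dsimp only
        rw [Nat.sub_sub_self ht.2.1, Fin.cons_self_tail]
    rw [← this, card_sigma, sum_congr rfl fun j _ => ih j, sum_range_choose_eq_choose_succ]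

theorem sum_divisors_moebius (n : ℕ) : ∑ d ∈ n.divisors, μ d = if n = 1 then 1 else 0 := by
  rw [← coe_mul_zeta_apply, moebius_mul_coe_zeta, one_apply]

theorem mem_Icc_of_mem_signalSpace {N k : ℕ} {t : Fin k → ℕ} (ht : t ∈ SignalSpace N k)
    (i : Fin k) : t i ∈ Icc 1 N :=
  Fintype.mem_piFinset.mp (mem_filter.mp ht).1 i

theorem mem_Icc_of_dvd_of_mem_Icc {d g N : ℕ} (hdg : d ∣ g) (hg : g ∈ Icc 1 N) : d ∈ Icc 1 N := by
  rw [mem_Icc] at hg ⊢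
  exact ⟨Nat.pos_of_dvd_of_pos hdg hg.1, (Nat.le_of_dvd hg.1 hdg).trans hg.2⟩

theorem gcd_mem_Icc_of_mem_signalSpace {N k : ℕ} (hk : k ≠ 0) {t : Fin k → ℕ}
    (ht : t ∈ SignalSpace N k) : univ.gcd t ∈ Icc 1 N :=
  mem_Icc_of_dvd_of_mem_Icc (gcd_dvd (mem_univ _))
    (mem_Icc_of_mem_signalSpace ht ⟨0, Nat.pos_of_ne_zero hk⟩)

theorem card_filter_dvd_gcd_signalSpace (N k : ℕ) {d : ℕ} (hd : 0 < d) :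
    #{t ∈ SignalSpace N k | d ∣ univ.gcd t} = #(SignalSpace (N / d) k) := by
  symm
  refine card_nbij' (fun u => d • u) (fun t => fun i => t i / d) ?_ ?_ ?_ ?_
  · intro u hu
    rw [mem_coe, mem_signalSpace] at hu
    simp only [mem_coe, mem_filter, mem_signalSpace, Pi.smul_apply, smul_eq_mul, ← mul_sum]
    refine ⟨⟨fun i => Nat.mul_pos hd (hu.1 i), ?_⟩,
      dvd_gcd fun i _ => dvd_mul_right d (u i)⟩
    exact (Nat.mul_le_mul_left d hu.2).trans (Nat.mul_div_le N d)
  · intro t ht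
    simp only [mem_coe, mem_filter, mem_signalSpace, Finset.dvd_gcd_iff, mem_univ,
      true_implies] at ht
    obtain ⟨⟨hpos, hsum⟩, hdvd⟩ := ht
    rw [mem_coe, mem_signalSpace, Nat.le_div_iff_mul_le hd, sum_mul]
    refine ⟨fun i => Nat.div_pos (Nat.le_of_dvd (hpos i) (hdvd i)) hd, ?_⟩
    simpa only [Nat.div_mul_cancel (hdvd _)] using hsum
  · intro u _
    funext i
    exact Nat.mul_div_cancel_left (u i) hd
  · intro t ht
    simp only [mem_coe, mem_filter, Finset.dvd_gcd_iff, mem_univ, true_implies] at ht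
    funext i
    exact Nat.mul_div_cancel' (ht.2 i)

theorem card_coprimeCode (N : ℕ) {k : ℕ} (hk : k ≠ 0) :
    (#(CoprimeCode N k) : ℤ) = ∑ d ∈ Icc 1 N, μ d * (N / d).choose k := by
  calc (#(CoprimeCode N k) : ℤ)
      = ∑ t ∈ SignalSpace N k, ∑ d ∈ (univ.gcd t).divisors, μ d := by
        simp only [sum_divisors_moebius, CoprimeCode, card_filter, Nat.cast_sum, Nat.cast_ite,
          Nat.cast_one, Nat.cast_zero]
    _ = ∑ d ∈ Icc 1 N, ∑ t ∈ SignalSpace N k with d ∣ univ.gcd t, μ d := by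
        refine sum_comm' fun t d => ?_
        rw [mem_filter, Nat.mem_divisors, and_assoc]
        refine and_congr_right fun ht => ?_
        have hg := gcd_mem_Icc_of_mem_signalSpace hk ht
        constructor
        · rintro ⟨hdvd, -⟩
          exact ⟨hdvd, mem_Icc_of_dvd_of_mem_Icc hdvd hg⟩
        · rintro ⟨hdvd, -⟩
          exact ⟨hdvd, Nat.one_le_iff_ne_zero.mp (mem_Icc.mp hg).1⟩
    _ = ∑ d ∈ Icc 1 N, μ d * (N / d).choose k := by
        refine sum_congr rfl fun d hd => ?_
        rw [sum_const, card_filter_dvd_gcd_signalSpace N k (mem_Icc.mp hd).1, card_signalSpace,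
          nsmul_eq_mul, mul_comm]

theorem card_coprimeCode_eq_tsum (N : ℕ) {k : ℕ} (hk : k ≠ 0) :
    (#(CoprimeCode N k) : ℝ) = ∑' d : ℕ, (μ d : ℝ) * (N / d).choose k := by
  rw [tsum_eq_sum (s := Icc 1 N) fun d hd => ?_]
  · exact_mod_cast card_coprimeCode N hk
  rcases eq_or_ne d 0 with rfl | hd0
  · simp
  · have hNd : N < d := by simp only [mem_Icc, not_and, not_le] at hd; omega
    simp [Nat.div_eq_of_lt hNd, Nat.choose_eq_zero_of_lt (Nat.pos_of_ne_zero hk)]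

theorem Confusable.symm {k : ℕ} {u v : Fin k → ℕ} (h : Confusable u v) : Confusable v u := by
  obtain ⟨c, hc, h⟩ := h
  exact ⟨c, hc, h.symm⟩

theorem confusable_smul_of_le {k a b : ℕ} (ha : 0 < a) (hab : a ≤ b) (p : Fin k → ℕ) :
    Confusable (a • p) (b • p) := by
  have ha' : (0 : ℝ) < a := Nat.cast_pos.mpr ha
  refine ⟨b / a, (one_le_div ha').mpr (Nat.cast_le.mpr hab), Or.inl fun i => ?_⟩
  simp only [Pi.smul_apply, smul_eq_mul, Nat.cast_mul]
  field_simp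

theorem eq_of_gcd_eq_one_of_mul_comm {k : ℕ} {u v : Fin k → ℕ} (hu : univ.gcd u = 1)
    (hv : univ.gcd v = 1) (h : ∀ i j, u i * v j = u j * v i) : u = v := by
  funext i
  calc u i = univ.gcd fun j => u i * v j := by rw [Finset.gcd_mul_left, hv]; simp
    _ = univ.gcd fun j => v i * u j := gcd_congr rfl fun j _ => by rw [h i j, mul_comm]
    _ = v i := by rw [Finset.gcd_mul_left, hu]; simp

theorem coprimeCode_isZeroErrorCode (N k : ℕ) : IsZeroErrorCode N k (CoprimeCode N k) := by
  refine ⟨filter_subset _ _, fun u hu v hv hne ⟨c, _, hc⟩ => hne ?_⟩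
  have hu := (mem_filter.mp hu).2
  have hv := (mem_filter.mp hv).2
  have mul_comm_of_real_mul {u v : Fin k → ℕ} (h : ∀ i, c * u i = v i) (i j : Fin k) :
      u i * v j = u j * v i := by
    exact_mod_cast (by rw [← h i, ← h j]; ring : (u i * v j : ℝ) = u j * v i)
  rcases hc with h | h
  · exact eq_of_gcd_eq_one_of_mul_comm hu hv (mul_comm_of_real_mul h)
  · exact (eq_of_gcd_eq_one_of_mul_comm hv hu (mul_comm_of_real_mul h)).symm

def primitivePart {k : ℕ} (t : Fin k → ℕ) : Fin k → ℕ := fun i => t i / univ.gcd t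

theorem gcd_smul_primitivePart {k : ℕ} (t : Fin k → ℕ) : univ.gcd t • primitivePart t = t :=
  funext fun i => Nat.mul_div_cancel' (gcd_dvd (mem_univ i))

theorem primitivePart_mem_coprimeCode {N k : ℕ} (hk : k ≠ 0) {t : Fin k → ℕ}
    (ht : t ∈ SignalSpace N k) : primitivePart t ∈ CoprimeCode N k := by
  have hg := mem_Icc.mp (gcd_mem_Icc_of_mem_signalSpace hk ht)
  rw [mem_signalSpace] at ht
  refine mem_filter.mpr ⟨mem_signalSpace.mpr ⟨fun i => ?_, ?_⟩, ?_⟩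
  · exact Nat.div_pos (Nat.le_of_dvd (ht.1 i) (gcd_dvd (mem_univ i))) hg.1
  · exact (sum_le_sum fun i _ => Nat.div_le_self (t i) _).trans ht.2
  · have i : Fin k := ⟨0, Nat.pos_of_ne_zero hk⟩
    exact gcd_div_eq_one (mem_univ i) (Nat.one_le_iff_ne_zero.mp (ht.1 i))

theorem confusable_of_primitivePart_eq {N k : ℕ} (hk : k ≠ 0) {u v : Fin k → ℕ}
    (hu : u ∈ SignalSpace N k) (hv : v ∈ SignalSpace N k)
    (h : primitivePart u = primitivePart v) : Confusable u v := by
  have hgu := (mem_Icc.mp (gcd_mem_Icc_of_mem_signalSpace hk hu)).1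
  have hgv := (mem_Icc.mp (gcd_mem_Icc_of_mem_signalSpace hk hv)).1
  rw [← gcd_smul_primitivePart u, ← gcd_smul_primitivePart v, h]
  rcases le_total (univ.gcd u) (univ.gcd v) with hle | hle
  · exact confusable_smul_of_le hgu hle _
  · exact (confusable_smul_of_le hgv hle _).symm

theorem IsZeroErrorCode.card_le_card_coprimeCode {N k : ℕ} (hk : k ≠ 0)
    {S : Finset (Fin k → ℕ)} (hS : IsZeroErrorCode N k S) : #S ≤ #(CoprimeCode N k) := by
  refine card_le_card_of_injOn primitivePart (fun t ht => ?_) fun u hu v hv h => ?_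
  · exact primitivePart_mem_coprimeCode hk (hS.1 ht)
  · by_contra hne
    exact hS.2 u hu v hv hne (confusable_of_primitivePart_eq hk (hS.1 hu) (hS.1 hv) h)

theorem isGreatest_card_coprimeCode {N k : ℕ} (hk : k ≠ 0) :
    IsGreatest {m : ℕ | ∃ S : Finset (Fin k → ℕ), IsZeroErrorCode N k S ∧ S.card = m}
      #(CoprimeCode N k) := by
  refine ⟨⟨_, coprimeCode_isZeroErrorCode N k, rfl⟩, ?_⟩
  rintro m ⟨S, hS, rfl⟩
  exact hS.card_le_card_coprimeCode hk

theorem Nat.choose_mul_pow_le_choose_mul_pow {m n : ℕ} (h : m ≤ n) (k : ℕ) :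
    m.choose k * n ^ k ≤ n.choose k * m ^ k := by
  induction k with
  | zero => simp
  | succ k ih =>
    have key : (m - k) * n ≤ (n - k) * m := by
      rcases le_total k m with hkm | hmk
      · zify [hkm, hkm.trans h]
        nlinarith
      · simp [Nat.sub_eq_zero_of_le hmk]
    have : m.choose (k + 1) * (k + 1) * n ^ (k + 1) ≤
        n.choose (k + 1) * (k + 1) * m ^ (k + 1) := by
      rw [Nat.choose_succ_right_eq, Nat.choose_succ_right_eq]
      calc m.choose k * (m - k) * n ^ (k + 1) = m.choose k * n ^ k * ((m - k) * n) := by ring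
        _ ≤ n.choose k * m ^ k * ((n - k) * m) := Nat.mul_le_mul ih key
        _ = n.choose k * (n - k) * m ^ (k + 1) := by ring
    refine Nat.le_of_mul_le_mul_right ?_ (by positivity : 0 < k + 1)
    convert this using 1 <;> ring

theorem choose_div_choose_le_div_pow {m n : ℕ} (h : m ≤ n) (k : ℕ) :
    (m.choose k : ℝ) / n.choose k ≤ ((m : ℝ) / n) ^ k := by
  rcases (n.choose k).eq_zero_or_pos with hc | hc
  · rw [hc, Nat.cast_zero, div_zero]
    positivity
  rcases n.eq_zero_or_pos with rfl | hn
  · obtain rfl := Nat.le_zero.mp h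
    rcases k with _ | k <;> simp
  rw [div_pow, div_le_div_iff₀ (by exact_mod_cast hc) (by positivity), mul_comm ((m : ℝ) ^ k)]
  exact_mod_cast Nat.choose_mul_pow_le_choose_mul_pow h k

theorem natCast_div_div_self_le (N d : ℕ) : ((N / d : ℕ) : ℝ) / N ≤ 1 / d := by
  rcases eq_or_ne N 0 with rfl | hN
  · simp
  calc ((N / d : ℕ) : ℝ) / N ≤ (N / d : ℝ) / N := by gcongr; exact Nat.cast_div_le
    _ = 1 / d := by field_simp

theorem tendsto_natCast_div_div_self {d : ℕ} (hd : d ≠ 0) :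
    Tendsto (fun N : ℕ => ((N / d : ℕ) : ℝ) / N) atTop (𝓝 (1 / d)) := by
  have hd' : (d : ℝ) ≠ 0 := Nat.cast_ne_zero.mpr hd
  have hx : Tendsto (fun N : ℕ => (N : ℝ) / d) atTop atTop :=
    tendsto_natCast_atTop_atTop.atTop_div_const (by positivity)
  refine ((tendsto_nat_floor_div_atTop.comp hx).div_const (d : ℝ)).congr fun N => ?_
  simp only [Function.comp_apply, Nat.floor_div_eq_div]
  rw [div_div, div_mul_cancel₀ _ hd']

theorem tendsto_choose_div_div_choose (k : ℕ) {d : ℕ} (hd : d ≠ 0) :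
    Tendsto (fun N : ℕ => ((N / d).choose k : ℝ) / N.choose k) atTop (𝓝 ((1 / d) ^ k)) := by
  have hequiv := ((isEquivalent_choose k).comp_tendsto (Nat.tendsto_div_const_atTop hd)).div
    (isEquivalent_choose k)
  refine hequiv.symm.tendsto_nhds (((tendsto_natCast_div_div_self hd).pow k).congr fun N => ?_)
  simp only [Function.comp_apply, Pi.div_apply]
  rw [div_div_div_cancel_right₀ (by positivity), div_pow]

theorem ofReal_zetaSum {k : ℕ} (hk : 1 < k) : (zetaSum k : ℂ) = riemannZeta k := by
  rw [zeta_eq_tsum_one_div_nat_add_one_cpow (by simpa using hk), zetaSum, Complex.ofReal_tsum]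
  refine tsum_congr fun n => ?_
  push_cast
  rw [Complex.cpow_natCast]

theorem LSeries_moebius_natCast {k : ℕ} (hk : k ≠ 0) :
    LSeries (fun n => (μ n : ℂ)) k = ((∑' n : ℕ, (μ n : ℝ) / (n : ℝ) ^ k : ℝ) : ℂ) := by
  rw [LSeries, Complex.ofReal_tsum]
  refine tsum_congr fun n => ?_
  rcases eq_or_ne n 0 with rfl | hn
  · simp [hk]
  · rw [LSeries.term_of_ne_zero hn, Complex.cpow_natCast]
    push_cast
    rfl

theorem tsum_moebius_div_pow {k : ℕ} (hk : 1 < k) :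
    ∑' n : ℕ, (μ n : ℝ) / (n : ℝ) ^ k = (zetaSum k)⁻¹ := by
  have hre : 1 < (k : ℂ).re := by simpa using hk
  have h := LSeries_zeta_mul_Lseries_moebius hre
  rw [LSeries_zeta_eq_riemannZeta hre, ← ofReal_zetaSum hk,
    LSeries_moebius_natCast (by omega), ← Complex.ofReal_mul, ← Complex.ofReal_one,
    Complex.ofReal_inj] at h
  exact eq_inv_of_mul_eq_one_right h

theorem tendsto_tsum_moebius_mul_choose_div_choose {k : ℕ} (hk : 1 < k) :
    Tendsto (fun N : ℕ => ∑' d : ℕ, (μ d : ℝ) * (N / d).choose k / N.choose k) atTop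
      (𝓝 (zetaSum k)⁻¹) := by
  rw [← tsum_moebius_div_pow hk]
  refine tendsto_tsum_of_dominated_convergence (bound := fun d : ℕ => 1 / (d : ℝ) ^ k)
    (Real.summable_one_div_nat_pow.mpr hk) (fun d => ?_) (Eventually.of_forall fun N d => ?_)
  · rcases eq_or_ne d 0 with rfl | hd
    · simp
    · have := (tendsto_choose_div_div_choose k hd).const_mul (μ d : ℝ)
      simpa only [mul_div_assoc, div_pow, one_pow, mul_one_div] using this
  · have hμ : |(μ d : ℝ)| ≤ 1 := by exact_mod_cast abs_moebius_le_one
    have hratio : ((N / d).choose k : ℝ) / N.choose k ≤ 1 / (d : ℝ) ^ k :=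
      calc _ ≤ (((N / d : ℕ) : ℝ) / N) ^ k :=
            choose_div_choose_le_div_pow (Nat.div_le_self N d) k
        _ ≤ (1 / d) ^ k := pow_le_pow_left₀ (by positivity) (natCast_div_div_self_le N d) k
        _ = 1 / (d : ℝ) ^ k := one_div_pow _ _
    rw [mul_div_assoc, norm_mul, Real.norm_eq_abs, Real.norm_of_nonneg (by positivity)]
    exact (mul_le_of_le_one_left (by positivity) hμ).trans hratio

theorem zero_error_capacity_unbounded (k : ℕ) (hk : 2 ≤ k) (M : ℕ → ℕ)
    (hM : ∀ N, IsGreatest {m : ℕ | ∃ S : Finset (Fin k → ℕ),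
      IsZeroErrorCode N k S ∧ S.card = m} (M N)) :
    Tendsto (fun N : ℕ => (M N : ℝ) / (N.choose k : ℝ)) atTop (nhds (zetaSum k)⁻¹) ∧
      ∀ N, M N = (CoprimeCode N k).card := by
  have hk0 : k ≠ 0 := by omega
  have hMN (N : ℕ) : M N = #(CoprimeCode N k) := (hM N).unique (isGreatest_card_coprimeCode hk0)
  refine ⟨(tendsto_tsum_moebius_mul_choose_div_choose hk).congr fun N => ?_, hMN⟩
  rw [hMN, card_coprimeCode_eq_tsum N hk0, tsum_div_const]
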